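/- arXiv:2111.08341 — 3 statements merged into one kernel-verified Lean document; each statement's English description precedes it below -/
import Mathlib

section
/- For every α ∈ ℂ, every rational m, every n ≥ 1, and every x ∈ ℂ with x + α + 1 ≠ 0, one has (x+α+1)^n · f_m^{(n)}((αx−1)/(x+α+1)) = f_m^{(n)}(α)·f_m^{(n)}(x) − (m²+m+1)·r^{(n)}(α)·r^{(n)}(x). -/
open Polynomial

/-- h(i) = 0, -1, -1, 0, 1, 1 according as i = 0,1,2,3,4,5 (mod 6). -/
def hcoef (i : ℕ) : ℤ :=
  match i % 6 with
  | 0 => 0 | 1 => -1 | 2 => -1 | 3 => 0 | 4 => 1 | _ => 1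

/-- g(i) = 1, -m, -m-1, -1, m, m+1 according as i = 0,1,2,3,4,5 (mod 6). -/
def gcoef (m : ℚ) (i : ℕ) : ℚ :=
  match i % 6 with
  | 0 => 1 | 1 => -m | 2 => -m - 1 | 3 => -1 | 4 => m | _ => m + 1

/-- f_m^{(n)}(X) = sum_{i=0}^n C(n,i) X^i g(n-i). -/
noncomputable def fpol (m : ℚ) (n : ℕ) : ℚ[X] :=
  ∑ i ∈ Finset.range (n + 1), C ((n.choose i : ℚ) * gcoef m (n - i)) * X ^ i

/-- r^{(n)}(X) = sum_{i=0}^n C(n,i) X^i h(n-i). -/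
noncomputable def rpol (n : ℕ) : ℤ[X] :=
  ∑ i ∈ Finset.range (n + 1), C ((n.choose i : ℤ) * hcoef (n - i)) * X ^ i

lemma gcoef_succ (m : ℚ) (k : ℕ) :
    gcoef m (k+1) = -m * gcoef m k + (m^2+m+1) * hcoef k := by
  unfold gcoef hcoef
  have h6 : (k+1) % 6 = (k % 6 + 1) % 6 := by omega
  have hk : k % 6 < 6 := Nat.mod_lt _ (by norm_num)
  interval_cases h : k % 6 <;> simp [h6] <;> push_cast <;> ring

lemma hcoef_succ (m : ℚ) (k : ℕ) :
    (hcoef (k+1) : ℚ) = -gcoef m k + (m+1) * hcoef k := by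
  unfold gcoef hcoef
  have h6 : (k+1) % 6 = (k % 6 + 1) % 6 := by omega
  have hk : k % 6 < 6 := Nat.mod_lt _ (by norm_num)
  interval_cases h : k % 6 <;> simp [h6] <;> push_cast <;> ring

lemma aeval_fpol (m : ℚ) (n : ℕ) (z : ℂ) :
    aeval z (fpol m n)
      = ∑ i ∈ Finset.range (n+1), (n.choose i : ℂ) * ((gcoef m (n-i) : ℚ) : ℂ) * z^i := by
  simp [fpol]

lemma aeval_rpol (n : ℕ) (z : ℂ) :
    aeval z (rpol n)
      = ∑ i ∈ Finset.range (n+1), (n.choose i : ℂ) * ((hcoef (n-i) : ℤ) : ℂ) * z^i := by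
  simp [rpol]

lemma Tsucc (c : ℕ → ℂ) (n : ℕ) (z : ℂ) :
    ∑ i ∈ Finset.range (n+2), ((n+1).choose i : ℂ) * c (n+1-i) * z^i
      = z * ∑ i ∈ Finset.range (n+1), (n.choose i : ℂ) * c (n-i) * z^i
        + ∑ i ∈ Finset.range (n+1), (n.choose i : ℂ) * c (n-i+1) * z^i := by
  have reindex : ∑ i ∈ Finset.range (n+1), (n.choose i : ℂ) * c (n-i+1) * z^i
      = (∑ j ∈ Finset.range (n+1), (n.choose (j+1) : ℂ) * c (n-j) * z^(j+1)) + c (n+1) := by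
    have h1 : ∑ i ∈ Finset.range (n+2), (n.choose i : ℂ) * c (n+1-i) * z^i
        = (∑ j ∈ Finset.range (n+1), (n.choose (j+1) : ℂ) * c (n-j) * z^(j+1)) + c (n+1) := by
      rw [Finset.sum_range_succ']
      simp
    have h2 : ∑ i ∈ Finset.range (n+2), (n.choose i : ℂ) * c (n+1-i) * z^i
        = ∑ i ∈ Finset.range (n+1), (n.choose i : ℂ) * c (n-i+1) * z^i := by
      rw [Finset.sum_range_succ]
      simp only [Nat.choose_succ_self, Nat.cast_zero, zero_mul, add_zero]
      apply Finset.sum_congr rfl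
      intro i hi
      have : n + 1 - i = n - i + 1 := by
        have := Finset.mem_range.1 hi; omega
      rw [this]
    rw [← h2, h1]
  rw [Finset.sum_range_succ']
  have key : ∀ j ∈ Finset.range (n+1),
      ((n+1).choose (j+1) : ℂ) * c (n+1-(j+1)) * z^(j+1)
        = (n.choose j : ℂ) * c (n-j) * z^(j+1) + (n.choose (j+1) : ℂ) * c (n-j) * z^(j+1) := by
    intro j hj
    have : n + 1 - (j+1) = n - j := by omega
    rw [this, Nat.choose_succ_succ]
    push_cast
    ring
  rw [Finset.sum_congr rfl key, Finset.sum_add_distrib, reindex, Finset.mul_sum]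
  simp only [Nat.choose_zero_right, Nat.cast_one, one_mul, pow_zero, mul_one]
  have : ∀ j ∈ Finset.range (n+1), (n.choose j : ℂ) * c (n-j) * z^(j+1)
      = z * ((n.choose j : ℂ) * c (n-j) * z^j) := by intro j _; ring
  rw [Finset.sum_congr rfl this, Nat.sub_zero]
  ring

lemma fpol_succ (m : ℚ) (n : ℕ) (z : ℂ) :
    aeval z (fpol m (n+1))
      = (z - m) * aeval z (fpol m n) + ((m:ℂ)^2 + m + 1) * aeval z (rpol n) := by
  rw [aeval_fpol, aeval_fpol, aeval_rpol, Tsucc (fun k => ((gcoef m k : ℚ) : ℂ)) n z]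
  have : ∀ i ∈ Finset.range (n+1),
      (n.choose i : ℂ) * ((gcoef m (n-i+1) : ℚ) : ℂ) * z^i
        = -m * ((n.choose i : ℂ) * ((gcoef m (n-i) : ℚ) : ℂ) * z^i)
          + ((m:ℂ)^2+m+1) * ((n.choose i : ℂ) * ((hcoef (n-i) : ℤ) : ℂ) * z^i) := by
    intro i _
    have h := gcoef_succ m (n-i)
    have h' : ((gcoef m (n-i+1) : ℚ) : ℂ) = -m * ((gcoef m (n-i) : ℚ):ℂ) + ((m:ℂ)^2+m+1) * ((hcoef (n-i):ℤ):ℂ) := by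
      rw [h]; push_cast; ring
    rw [h']; ring
  rw [Finset.sum_congr rfl this, Finset.sum_add_distrib, ← Finset.mul_sum, ← Finset.mul_sum]
  ring

lemma rpol_succ (m : ℚ) (n : ℕ) (z : ℂ) :
    aeval z (rpol (n+1))
      = (z + m + 1) * aeval z (rpol n) - aeval z (fpol m n) := by
  rw [aeval_rpol, aeval_rpol, aeval_fpol, Tsucc (fun k => ((hcoef k : ℤ) : ℂ)) n z]
  have : ∀ i ∈ Finset.range (n+1),
      (n.choose i : ℂ) * ((hcoef (n-i+1) : ℤ) : ℂ) * z^i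
        = -((n.choose i : ℂ) * ((gcoef m (n-i) : ℚ) : ℂ) * z^i)
          + ((m:ℂ)+1) * ((n.choose i : ℂ) * ((hcoef (n-i) : ℤ) : ℂ) * z^i) := by
    intro i _
    have h := hcoef_succ m (n-i)
    have h' : ((hcoef (n-i+1) : ℤ) : ℂ) = -((gcoef m (n-i) : ℚ):ℂ) + ((m:ℂ)+1) * ((hcoef (n-i):ℤ):ℂ) := by
      have : ((hcoef (n-i+1) : ℤ) : ℂ) = (((hcoef (n-i+1) : ℤ) : ℚ) : ℂ) := by push_cast; ring
      rw [this, h]; push_cast; ring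
    rw [h']; ring
  rw [Finset.sum_congr rfl this, Finset.sum_add_distrib, ← Finset.mul_sum]
  rw [show ∀ s : Finset ℕ, ∀ f : ℕ → ℂ, ∑ i ∈ s, -(f i) = -∑ i ∈ s, f i from fun s f => by simp]
  ring

theorem stmt3 (α : ℂ) (m : ℚ) (n : ℕ) (hn : 1 ≤ n) (x : ℂ) (hx : x + α + 1 ≠ 0) :
    (x + α + 1) ^ n * aeval ((α * x - 1) / (x + α + 1)) (fpol m n) =
      aeval α (fpol m n) * aeval x (fpol m n) -
        ((m : ℂ) ^ 2 + (m : ℂ) + 1) * aeval α (rpol n) * aeval x (rpol n) := by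
  set y : ℂ := (α * x - 1) / (x + α + 1) with hy_def
  have hy : (x + α + 1) * y = α * x - 1 := by
    rw [hy_def]; field_simp
  suffices H : ∀ k : ℕ,
      ((x + α + 1) ^ k * aeval y (fpol m k) =
        aeval α (fpol m k) * aeval x (fpol m k) -
          ((m : ℂ) ^ 2 + m + 1) * aeval α (rpol k) * aeval x (rpol k)) ∧
      ((x + α + 1) ^ k * aeval y (rpol k) =
        aeval α (fpol m k) * aeval x (rpol k) + aeval α (rpol k) * aeval x (fpol m k)
          - (2 * (m:ℂ) + 1) * aeval α (rpol k) * aeval x (rpol k)) by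
    exact (H n).1
  intro k
  induction k with
  | zero =>
    constructor <;> simp [aeval_fpol, aeval_rpol, gcoef, hcoef]
  | succ k ih =>
    obtain ⟨ih1, ih2⟩ := ih
    constructor
    · rw [fpol_succ, fpol_succ, fpol_succ, rpol_succ m, rpol_succ m, pow_succ]
      linear_combination ((x+α+1)^k * aeval y (fpol m k)) * hy
        + (α*x - 1 - (m:ℂ)*(x+α+1)) * ih1 + ((m:ℂ)^2+m+1)*(x+α+1) * ih2
    · rw [fpol_succ, fpol_succ, rpol_succ m, rpol_succ m, rpol_succ m, pow_succ]
      linear_combination ((x+α+1)^k * aeval y (rpol k)) * hy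
        + (α*x - 1 + ((m:ℂ)+1)*(x+α+1)) * ih2 - (x+α+1) * ih1
end

section
/- Let n ≥ 2 and m ∈ ℚ. If β ∈ ℂ is a root of f_m^{(n)} and α ∈ ℂ is a root of r^{(n)}, then β + α + 1 ≠ 0 and (αβ − 1)/(β + α + 1) is also a root of f_m^{(n)}. -/
open Polynomial

lemma gcoef_rec (m : ℚ) (j : ℕ) : gcoef m (j+2) = gcoef m (j+1) - gcoef m j := by
  have h0 : j % 6 < 6 := Nat.mod_lt _ (by norm_num)
  have e1 : (j+1) % 6 = (j % 6 + 1) % 6 := by omega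
  have e2 : (j+2) % 6 = (j % 6 + 2) % 6 := by omega
  unfold gcoef
  rw [e1, e2]
  interval_cases (j % 6) <;> norm_num <;> ring

lemma hcoef_rec (j : ℕ) : hcoef (j+2) = hcoef (j+1) - hcoef j := by
  have h0 : j % 6 < 6 := Nat.mod_lt _ (by norm_num)
  have e1 : (j+1) % 6 = (j % 6 + 1) % 6 := by omega
  have e2 : (j+2) % 6 = (j % 6 + 2) % 6 := by omega
  unfold hcoef
  rw [e1, e2]
  interval_cases (j % 6) <;> norm_num

noncomputable def sq3i : ℂ := (Real.sqrt 3 : ℂ) * Complex.I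

lemma sq3i_sq : sq3i ^ 2 = -3 := by
  unfold sq3i
  have h : ((Real.sqrt 3 : ℝ) : ℂ) ^ 2 = 3 := by
    norm_cast
    rw [Real.sq_sqrt]; norm_num
  rw [mul_pow, h, Complex.I_sq]; ring

lemma sq3i_ne : sq3i ≠ 0 := by
  unfold sq3i
  apply mul_ne_zero
  · rw [Complex.ofReal_ne_zero]; positivity
  · exact Complex.I_ne_zero

noncomputable def om : ℂ := (1 + sq3i) / 2

lemma om_sq : om ^ 2 = om - 1 := by
  unfold om; linear_combination sq3i_sq / 4

lemma om_sq' : (1 - om) ^ 2 = (1 - om) - 1 := by linear_combination om_sq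

noncomputable def Ac (m : ℚ) : ℂ := 1/2 + (2*(m:ℂ)+1) * sq3i / 6
noncomputable def Bc (m : ℚ) : ℂ := 1/2 - (2*(m:ℂ)+1) * sq3i / 6

lemma gval (m : ℚ) : ∀ j : ℕ, ((gcoef m j : ℚ) : ℂ) = Ac m * om ^ j + Bc m * (1 - om) ^ j := by
  intro j
  induction j using Nat.strong_induction_on with
  | _ j ih =>
    match j with
    | 0 =>
        show ((gcoef m 0 : ℚ) : ℂ) = _
        norm_num [gcoef, Ac, Bc]
    | 1 =>
        show ((gcoef m 1 : ℚ) : ℂ) = _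
        show ((-m : ℚ) : ℂ) = _
        push_cast
        unfold Ac Bc om
        linear_combination (-(2*(m:ℂ)+1)/6) * sq3i_sq
    | (j+2) =>
        have h1 := ih (j+1) (by omega)
        have h0 := ih j (by omega)
        rw [gcoef_rec m j]
        push_cast
        rw [h1, h0]
        linear_combination (-(Ac m * om ^ j) - Bc m * (1-om) ^ j) * om_sq

lemma hval : ∀ j : ℕ, ((hcoef j : ℤ) : ℂ) = (sq3i/3) * om ^ j - (sq3i/3) * (1 - om) ^ j := by
  intro j
  induction j using Nat.strong_induction_on with
  | _ j ih =>
    match j with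
    | 0 =>
        show ((hcoef 0 : ℤ) : ℂ) = _
        norm_num [hcoef]
    | 1 =>
        show ((hcoef 1 : ℤ) : ℂ) = _
        show (((-1 : ℤ)) : ℂ) = _
        push_cast
        unfold om
        linear_combination (-1/3) * sq3i_sq
    | (j+2) =>
        have h1 := ih (j+1) (by omega)
        have h0 := ih j (by omega)
        rw [hcoef_rec j]
        push_cast
        rw [h1, h0]
        linear_combination (-(sq3i/3 * om ^ j) + sq3i/3 * (1-om) ^ j) * om_sq

lemma fval (m : ℚ) (n : ℕ) (z : ℂ) :
    aeval z (fpol m n) = Ac m * (z + om) ^ n + Bc m * (z + (1 - om)) ^ n := by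
  simp only [fpol, map_sum, map_mul, map_pow, aeval_C, aeval_X]
  rw [add_pow z om n, add_pow z (1 - om) n, Finset.mul_sum, Finset.mul_sum,
    ← Finset.sum_add_distrib]
  apply Finset.sum_congr rfl
  intro i _
  push_cast
  simp only [eq_ratCast]
  rw [gval m (n - i)]
  ring

lemma rval (n : ℕ) (z : ℂ) :
    aeval z (rpol n) = (sq3i/3) * (z + om) ^ n - (sq3i/3) * (z + (1 - om)) ^ n := by
  simp only [rpol, map_sum, map_mul, map_pow, aeval_C, aeval_X]
  rw [add_pow z om n, add_pow z (1 - om) n, Finset.mul_sum, Finset.mul_sum,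
    ← Finset.sum_sub_distrib]
  apply Finset.sum_congr rfl
  intro i _
  push_cast
  simp only [eq_intCast]
  rw [hval (n - i)]
  ring

theorem stmt8 (n : ℕ) (hn : 2 ≤ n) (m : ℚ) (β α : ℂ)
    (hβ : aeval β (fpol m n) = 0) (hα : aeval α (rpol n) = 0) :
    β + α + 1 ≠ 0 ∧ aeval ((α * β - 1) / (β + α + 1)) (fpol m n) = 0 := by
  have hn0 : n ≠ 0 := by omega
  rw [fval] at hβ
  rw [rval] at hα
  -- from hα : (α+ω)^n = (α+ω̄)^n
  have hs3 : (sq3i / 3 : ℂ) ≠ 0 := by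
    simpa using sq3i_ne
  have hαe : (α + (1 - om)) ^ n = (α + om) ^ n := by
    have h : sq3i / 3 * ((α + om) ^ n - (α + (1 - om)) ^ n) = 0 := by linear_combination hα
    have h2 := (mul_eq_zero.mp h).resolve_left hs3
    exact (sub_eq_zero.mp h2).symm
  -- nonvanishing of t = β + α + 1
  have ht : β + α + 1 ≠ 0 := by
    intro h0
    have e1 : β + om = -(α + (1 - om)) := by linear_combination h0
    have e2 : β + (1 - om) = -(α + om) := by linear_combination h0
    rw [e1, e2, neg_pow (α + (1 - om)), neg_pow (α + om), hαe] at hβ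
    have hβ' : (-1 : ℂ) ^ n * ((Ac m + Bc m) * (α + om) ^ n) = 0 := by linear_combination hβ
    have hne : ((-1 : ℂ) ^ n) ≠ 0 := pow_ne_zero _ (by norm_num)
    have hAB : Ac m + Bc m = 1 := by unfold Ac Bc; ring
    have h3 : (α + om) ^ n = 0 := by
      have := (mul_eq_zero.mp hβ').resolve_left hne
      rw [hAB, one_mul] at this; exact this
    have h4 : α + om = 0 := pow_eq_zero_iff hn0 |>.mp h3
    have h5 : α + (1 - om) = 0 := by
      have := hαe
      rw [h3] at this
      exact pow_eq_zero_iff hn0 |>.mp this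
    have : sq3i = 0 := by
      have hom : om = (1 + sq3i) / 2 := rfl
      linear_combination h4 - h5 - 2 * hom
    exact sq3i_ne this
  refine ⟨ht, ?_⟩
  rw [fval]
  set t := β + α + 1 with htdef
  have hγ1 : (α * β - 1) / t + om = (α + om) * (β + om) / t := by
    rw [div_add' _ _ _ ht]
    rw [div_eq_div_iff ht ht]
    linear_combination (-t) * om_sq
  have hγ2 : (α * β - 1) / t + (1 - om) = (α + (1 - om)) * (β + (1 - om)) / t := by
    rw [div_add' _ _ _ ht]
    rw [div_eq_div_iff ht ht]
    linear_combination (-t) * om_sq'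
  rw [hγ1, hγ2, div_pow, div_pow, mul_pow, mul_pow, hαe]
  have : Ac m * ((α + om) ^ n * (β + om) ^ n / t ^ n)
      + Bc m * ((α + om) ^ n * (β + (1 - om)) ^ n / t ^ n)
      = (α + om) ^ n / t ^ n * (Ac m * (β + om) ^ n + Bc m * (β + (1 - om)) ^ n) := by
    ring
  rw [this, hβ, mul_zero]
end

section
/- For every n ≥ 1, the resultant of X² + X + 1 and r^{(n)}(X) equals 3^{n−1}. -/
open Polynomial

/-- Sylvester matrix of `f` (regarded as of degree `m`) and `g` (regarded as of
degree `n`): the first `n` rows contain the coefficients of `f` (in decreasing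
order, shifted), the last `m` rows those of `g`. -/
def sylvester {R : Type*} [CommRing R] (m n : ℕ) (f g : R[X]) :
    Matrix (Fin (n + m)) (Fin (n + m)) R :=
  Matrix.of fun i j =>
    if (i : ℕ) < n then
      (if (i : ℕ) ≤ (j : ℕ) ∧ (j : ℕ) ≤ (i : ℕ) + m then f.coeff (m + i - j) else 0)
    else
      (if (i : ℕ) - n ≤ (j : ℕ) ∧ (j : ℕ) ≤ ((i : ℕ) - n) + n then
        g.coeff (n + ((i : ℕ) - n) - j) else 0)

/-- The resultant of `f` (of degree `m`) and `g` (of degree `n`), as the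
determinant of the Sylvester matrix. -/
def res {R : Type*} [CommRing R] (m n : ℕ) (f g : R[X]) : R :=
  (sylvester m n f g).det

-- ===== auxiliary development =====
noncomputable abbrev fq : ℤ[X] := X ^ 2 + X + 1
abbrev AR := AdjoinRoot (fq)
noncomputable abbrev ρ : AR := AdjoinRoot.root fq
noncomputable abbrev u : AR := 2 * ρ + 1

lemma hρ : ρ ^ 2 + ρ + 1 = 0 := by
  have := AdjoinRoot.mk_self (f := fq)
  simpa [AR, map_add, map_pow, map_one] using this

lemma hu2 : u ^ 2 = -3 := by
  have := hρ
  show (2 * ρ + 1)^2 = -3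
  linear_combination (4 : AR) * this

lemma hρ3 : ρ ^ 3 = 1 := by
  linear_combination (ρ - 1) * hρ

lemma hω6 : (1 + ρ) ^ 6 = 1 := by
  have h2 : (1 + ρ) = -ρ^2 := by linear_combination hρ
  rw [h2]; ring_nf
  rw [show (12 : ℕ) = 3 * 4 by rfl, pow_mul, hρ3, one_pow]

lemma hν6 : (-ρ) ^ 6 = 1 := by
  ring_nf
  rw [show (6:ℕ) = 3*2 by rfl, pow_mul, hρ3, one_pow]

lemma hA (k : ℕ) : u * ((hcoef k : ℤ) : AR) = (-ρ) ^ k - (1 + ρ) ^ k := by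
  have hk : k = 6 * (k / 6) + k % 6 := (Nat.div_add_mod k 6).symm
  rw [show (-ρ)^k = ((-ρ)^6)^(k/6) * (-ρ)^(k%6) by rw [← pow_mul, ← pow_add, ← hk],
    show (1+ρ)^k = ((1+ρ)^6)^(k/6) * (1+ρ)^(k%6) by rw [← pow_mul, ← pow_add, ← hk],
    hν6, hω6, one_pow, one_mul, one_mul]
  unfold hcoef
  have h6 : k % 6 < 6 := Nat.mod_lt _ (by norm_num)
  interval_cases h : k % 6 <;> simp only [h] <;> push_cast
  · linear_combination (0:AR) * hρ
  · linear_combination (0:AR) * hρ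
  · linear_combination (0:AR) * hρ
  · linear_combination (2*ρ+1) * hρ
  · linear_combination (4*ρ+2) * hρ
  · linear_combination (2*ρ^3+3*ρ^2+5*ρ+2) * hρ

lemma hfm : (fq).Monic := by show (X^2+X+1 : ℤ[X]).Monic; monicity!

lemma huk (n : ℕ) : u * AdjoinRoot.mk fq (rpol n) = 0 ^ n - u ^ n := by
  rw [rpol, map_sum, Finset.mul_sum]
  rw [Finset.sum_congr rfl (fun i _ => by
    simp only [map_mul, map_pow, AdjoinRoot.mk_X, AdjoinRoot.mk_C, eq_intCast]
    have h := hA (n - i)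
    push_cast
    simp only [map_intCast, map_natCast]
    linear_combination ((n.choose i : AR) * ρ ^ i) * h :
    ∀ i ∈ Finset.range (n+1), u * (AdjoinRoot.mk fq (C ((n.choose i : ℤ) * hcoef (n-i)) * X ^ i))
      = (n.choose i : AR) * (ρ ^ i * (-ρ) ^ (n-i)) - (n.choose i : AR) * (ρ ^ i * (1+ρ) ^ (n-i)))]
  rw [Finset.sum_sub_distrib]
  congr 1
  · rw [show (0:AR) = ρ + -ρ by ring, add_pow]
    exact Finset.sum_congr rfl fun i _ => by ring
  · rw [show u = ρ + (1 + ρ) by show _ = _; ring, add_pow]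
    exact Finset.sum_congr rfl fun i _ => by ring

noncomputable instance : Module.Free ℤ AR := Module.Free.of_basis (AdjoinRoot.powerBasis' hfm).basis

lemma hmk (n : ℕ) (hn : 1 ≤ n) : AdjoinRoot.mk fq (rpol n) = -u ^ (n - 1) := by
  have h := huk n
  rw [zero_pow (by omega)] at h
  set d : AR := AdjoinRoot.mk fq (rpol n) + u ^ (n - 1) with hd
  have hud : u * d = 0 := by
    rw [hd, mul_add, h, ← pow_succ']
    rw [show n - 1 + 1 = n by omega]; ring
  have h3 : (3 : ℤ) • d = 0 := by
    have : u * (u * d) = 0 := by rw [hud, mul_zero]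
    rw [← mul_assoc, ← pow_two, hu2] at this
    have : (3 : AR) * d = 0 := by linear_combination -this
    rw [zsmul_eq_mul]; push_cast; exact this
  have : d = 0 := by
    rcases smul_eq_zero.mp h3 with h | h
    · norm_num at h
    · exact h
  exact eq_neg_of_add_eq_zero_left this

lemma hfq3 (d : ℕ) (hd : 3 ≤ d) : (fq).coeff d = 0 := by
  apply coeff_eq_zero_of_natDegree_lt
  have : (fq).natDegree ≤ 2 := by show (X^2+X+1 : ℤ[X]).natDegree ≤ 2; compute_degree
  omega

lemma coeff_term (c : ℤ) (k d : ℕ) :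
    (C c * X ^ k * fq).coeff d = if k ≤ d then c * fq.coeff (d - k) else 0 := by
  rw [show C c * X ^ k * fq = (C c * fq) * X ^ k by ring, coeff_mul_X_pow']
  split_ifs <;> simp [coeff_C_mul]

lemma sylv_f {n' : ℕ} (g' : ℤ[X]) (i j : Fin (n' + 2)) (h : (i:ℕ) < n') :
    sylvester 2 n' fq g' i j =
      (if (i:ℕ) ≤ (j:ℕ) ∧ (j:ℕ) ≤ (i:ℕ) + 2 then fq.coeff (2 + (i:ℕ) - (j:ℕ)) else 0) :=
  if_pos h

lemma sylv_g {n' : ℕ} (g' : ℤ[X]) (i j : Fin (n' + 2)) (h : n' ≤ (i:ℕ)) :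
    sylvester 2 n' fq g' i j =
      (if (i:ℕ) - n' ≤ (j:ℕ) ∧ (j:ℕ) ≤ ((i:ℕ) - n') + n' then
        g'.coeff (n' + ((i:ℕ) - n') - (j:ℕ)) else 0) :=
  if_neg (by omega)

lemma resB (n' k : ℕ) (hk : k + 2 ≤ n') (c : ℤ) (g : ℤ[X]) :
    res 2 n' fq (g + C c * X ^ k * fq) = res 2 n' fq g := by
  have hr0 : n' < n' + 2 := by omega
  have hr1 : n' + 1 < n' + 2 := by omega
  have hp0 : n' - k - 2 < n' + 2 := by omega
  have hp1 : n' - k - 1 < n' + 2 := by omega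
  set A := sylvester 2 n' fq g with hA
  let r0 : Fin (n' + 2) := ⟨n', hr0⟩
  let r1 : Fin (n' + 2) := ⟨n' + 1, hr1⟩
  let p0 : Fin (n' + 2) := ⟨n' - k - 2, hp0⟩
  let p1 : Fin (n' + 2) := ⟨n' - k - 1, hp1⟩
  have e0 : (r0:ℕ) = n' := rfl
  have e1 : (r1:ℕ) = n' + 1 := rfl
  have f0 : (p0:ℕ) = n' - k - 2 := rfl
  have f1 : (p1:ℕ) = n' - k - 1 := rfl
  set A2 := A.updateRow r0 (A r0 + c • A p0) with hA2
  set A3 := A2.updateRow r1 (A2 r1 + c • A2 p1) with hA3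
  have hd2 : A2.det = A.det :=
    Matrix.det_updateRow_add_smul_self A (Fin.ne_of_val_ne (by rw [e0, f0]; omega)) c
  have hd3 : A3.det = A2.det :=
    Matrix.det_updateRow_add_smul_self A2 (Fin.ne_of_val_ne (by rw [e1, f1]; omega)) c
  have hS : sylvester 2 n' fq (g + C c * X ^ k * fq) = A3 := by
    ext i j
    have hp1r0 : p1 ≠ r0 := Fin.ne_of_val_ne (by rw [e0, f1]; omega)
    have hr1r0 : r1 ≠ r0 := Fin.ne_of_val_ne (by rw [e0, e1]; omega)
    rw [hA3, hA2]
    simp only [Matrix.updateRow_apply, Matrix.updateRow_ne hp1r0]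
    by_cases hi1 : i = r1
    · rw [if_pos hi1, Matrix.updateRow_ne hr1r0]
      subst hi1
      simp only [Pi.add_apply, Pi.smul_apply, smul_eq_mul, hA]
      rw [sylv_g _ _ _ (by omega), sylv_g _ _ _ (by omega), sylv_f _ _ _ (by rw [f1]; omega)]
      rw [e1, f1, show n' + 1 - n' = 1 by omega]
      by_cases hw : 1 ≤ (j:ℕ) ∧ (j:ℕ) ≤ 1 + n'
      · rw [if_pos hw, if_pos hw, coeff_add, coeff_term]
        congr 1
        by_cases hj : (n'-k-1:ℕ) ≤ (j:ℕ) ∧ (j:ℕ) ≤ (n'-k-1) + 2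
        · rw [if_pos (show k ≤ n' + 1 - (j:ℕ) by omega), if_pos hj,
            show n' + 1 - (j:ℕ) - k = 2 + (n'-k-1) - (j:ℕ) by omega]
        · rw [if_neg hj]
          by_cases hk2 : k ≤ n' + 1 - (j:ℕ)
          · rw [if_pos hk2, hfq3 _ (by omega), mul_zero]
          · rw [if_neg hk2, mul_zero]
      · rw [if_neg hw, if_neg hw, if_neg (by omega), mul_zero, add_zero]
    · rw [if_neg hi1]
      by_cases hi0 : i = r0
      · rw [if_pos hi0]
        subst hi0
        simp only [Pi.add_apply, Pi.smul_apply, smul_eq_mul, hA]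
        rw [sylv_g _ _ _ (by omega), sylv_g _ _ _ (by omega), sylv_f _ _ _ (by rw [f0]; omega)]
        rw [e0, f0, Nat.sub_self]
        by_cases hw : 0 ≤ (j:ℕ) ∧ (j:ℕ) ≤ 0 + n'
        · rw [if_pos hw, if_pos hw, coeff_add, coeff_term]
          congr 1
          by_cases hj : (n'-k-2:ℕ) ≤ (j:ℕ) ∧ (j:ℕ) ≤ (n'-k-2) + 2
          · rw [if_pos (show k ≤ n' + 0 - (j:ℕ) by omega), if_pos hj,
              show n' + 0 - (j:ℕ) - k = 2 + (n'-k-2) - (j:ℕ) by omega]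
          · rw [if_neg hj]
            by_cases hk2 : k ≤ n' + 0 - (j:ℕ)
            · rw [if_pos hk2, hfq3 _ (by omega), mul_zero]
            · rw [if_neg hk2, mul_zero]
        · rw [if_neg hw, if_neg hw, if_neg (by omega), mul_zero, add_zero]
      · have hiv : (i:ℕ) < n' := by
          have h2 := i.isLt
          have h3 : (i:ℕ) ≠ n' + 1 := fun h => hi1 (Fin.ext h)
          have h4 : (i:ℕ) ≠ n' := fun h => hi0 (Fin.ext h)
          omega
        rw [if_neg hi0, hA, sylv_f _ _ _ hiv, sylv_f _ _ _ hiv]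
  rw [res, res, hS, hd3, hd2, hA]

lemma resC (n' : ℕ) (hn : 2 ≤ n') (q : ℤ[X]) (hq : q.natDegree ≤ n' - 2) (g : ℤ[X]) :
    res 2 n' fq (g + q * fq) = res 2 n' fq g := by
  revert g
  refine Polynomial.induction_with_natDegree_le
    (fun q => ∀ g, res 2 n' fq (g + q * fq) = res 2 n' fq g) (n' - 2) ?_ ?_ ?_ q hq
  · intro g; simp
  · intro k r _ hkn g
    exact resB n' k (by omega) r g
  · intro p r _ _ hp hr g
    rw [show g + (p + r) * fq = (g + r * fq) + p * fq by ring, hp, hr]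

lemma lcoeff0 (a b : ℤ) : (C a * X + C b).coeff 0 = b := by simp
lemma lcoeff1 (a b : ℤ) : (C a * X + C b).coeff 1 = a := by
  rw [coeff_add, coeff_C_mul, coeff_X_one, mul_one, coeff_C, if_neg (by norm_num), add_zero]
lemma lcoeff2 (a b : ℤ) (d : ℕ) (hd : 2 ≤ d) : (C a * X + C b).coeff d = 0 := by
  rw [coeff_add, coeff_C_mul, coeff_X, coeff_C, if_neg (by omega), if_neg (by omega)]
  ring

lemma icast_coeff_ne (b : ℤ) (d : ℕ) (h : d ≠ 0) : ((b : ℤ[X])).coeff d = 0 := by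
  rw [← C_eq_intCast b, coeff_C, if_neg h]

lemma resD (n' : ℕ) (a b : ℤ) :
    res 2 (n' + 1) fq (C a * X + C b) = a ^ 2 - a * b + b ^ 2 := by
  induction n' with
  | zero =>
    have hM : sylvester 2 1 fq (C a * X + C b) = !![1, 1, 1; a, b, 0; 0, a, b] := by
      ext i j
      fin_cases i <;> fin_cases j <;>
        simp [_root_.sylvester, coeff_add, coeff_C_mul, coeff_X, coeff_C, coeff_one, coeff_X_pow,
          icast_coeff_ne, intCast_coeff_zero]
    rw [res, hM, Matrix.det_fin_three]
    simp
    ring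
  | succ m ih =>
    rw [res]
    have hcol : ∀ i : Fin (m + 2 + 2), i ≠ 0 → sylvester 2 (m + 2) fq (C a * X + C b) i 0 = 0 := by
      intro i hi
      have hiv : (i:ℕ) ≠ 0 := fun h => hi (Fin.ext h)
      by_cases h1 : (i:ℕ) < m + 2
      · rw [sylv_f _ _ _ h1, if_neg (by simp only [Fin.val_zero]; omega)]
      · rw [sylv_g _ _ _ (by omega)]
        by_cases h2 : (i:ℕ) - (m+2) ≤ ((0 : Fin (m+2+2)):ℕ) ∧ ((0 : Fin (m+2+2)):ℕ) ≤ ((i:ℕ) - (m+2)) + (m+2)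
        · rw [if_pos h2, lcoeff2 _ _ _ (by simp only [Fin.val_zero]; omega)]
        · rw [if_neg h2]
    rw [show sylvester 2 (m + 2) fq (C a * X + C b)
        = sylvester 2 (m + 1 + 1) fq (C a * X + C b) from rfl] at hcol ⊢
    rw [Matrix.det_succ_column_zero, Finset.sum_eq_single 0]
    · have h00 : sylvester 2 (m + 1 + 1) fq (C a * X + C b) 0 0 = 1 := by
        rw [sylv_f (n' := m+1+1) _ _ _ (by simp), if_pos (by simp)]
        simp [coeff_one, coeff_X, coeff_X_pow]
      rw [h00]
      have hsub : (sylvester 2 (m + 1 + 1) fq (C a * X + C b)).submatrix (Fin.succAbove 0) Fin.succ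
          = sylvester 2 (m + 1) fq (C a * X + C b) := by
        ext i j
        rw [Matrix.submatrix_apply, Fin.succAbove_zero]
        by_cases h1 : (i:ℕ) < m + 1
        · rw [sylv_f _ _ _ (by rw [Fin.val_succ]; omega), sylv_f _ _ _ h1, Fin.val_succ, Fin.val_succ]
          by_cases h2 : (i:ℕ) ≤ (j:ℕ) ∧ (j:ℕ) ≤ (i:ℕ) + 2
          · rw [if_pos (by omega), if_pos h2, show 2 + ((i:ℕ)+1) - ((j:ℕ)+1) = 2 + (i:ℕ) - (j:ℕ) by omega]
          · rw [if_neg (by omega), if_neg h2]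
        · rw [sylv_g _ _ _ (by rw [Fin.val_succ]; omega), sylv_g _ _ _ (by omega), Fin.val_succ, Fin.val_succ]
          by_cases h2 : (i:ℕ) - (m+1) ≤ (j:ℕ) ∧ (j:ℕ) ≤ ((i:ℕ) - (m+1)) + (m+1)
          · rw [if_pos (by omega), if_pos h2,
              show (m+1+1) + (((i:ℕ)+1) - (m+1+1)) - ((j:ℕ)+1) = (m+1) + ((i:ℕ) - (m+1)) - (j:ℕ) by omega]
          · rw [if_neg h2]
            by_cases h3 : ((i:ℕ)+1) - (m+1+1) ≤ (j:ℕ)+1 ∧ (j:ℕ)+1 ≤ (((i:ℕ)+1) - (m+1+1)) + (m+1+1)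
            · rw [if_pos h3, lcoeff2 _ _ _ (by omega)]
            · rw [if_neg h3]
      rw [hsub, ← res, ih]
      simp
    · intro i _ hi
      rw [hcol i hi]
      ring
    · intro h
      simp at h

def acoef (n : ℕ) : ℤ := if (n - 1) % 2 = 0 then 0 else -2 * (-3) ^ ((n - 1) / 2)
def bcoef (n : ℕ) : ℤ := -(-3 : ℤ) ^ ((n - 1) / 2)
noncomputable def lpol (n : ℕ) : ℤ[X] := C (acoef n) * X + C (bcoef n)

lemma hmkl (n : ℕ) : AdjoinRoot.mk fq (lpol n) = -u ^ (n - 1) := by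
  have hsplit : n - 1 = 2 * ((n - 1) / 2) + (n - 1) % 2 := by omega
  rw [lpol, map_add, map_mul, AdjoinRoot.mk_X, AdjoinRoot.mk_C, AdjoinRoot.mk_C, eq_intCast,
    eq_intCast]
  rw [show u ^ (n-1) = (u ^ 2) ^ ((n-1)/2) * u ^ ((n-1)%2) by
    rw [← pow_mul, ← pow_add, ← hsplit], hu2]
  rcases Nat.eq_zero_or_pos ((n - 1) % 2) with he | he
  · rw [acoef, bcoef, if_pos he, he, pow_zero, mul_one]
    push_cast
    ring
  · have he1 : (n - 1) % 2 = 1 := by omega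
    rw [acoef, bcoef, if_neg (by omega), he1, pow_one]
    push_cast
    show _ = -((-3:AR) ^ ((n-1)/2) * (2 * ρ + 1))
    ring

lemma hdvd (n : ℕ) (hn : 1 ≤ n) : fq ∣ rpol n - lpol n := by
  rw [← AdjoinRoot.mk_eq_zero, map_sub, hmk n hn, hmkl n, sub_self]

lemma rpol_coeff (n j : ℕ) : (rpol n).coeff j = (n.choose j : ℤ) * hcoef (n - j) := by
  rw [rpol, finset_sum_coeff]
  simp only [coeff_C_mul, coeff_X_pow, mul_ite, mul_one, mul_zero]
  rw [Finset.sum_ite_eq (Finset.range (n + 1)) j]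
  by_cases h : j ∈ Finset.range (n + 1)
  · rw [if_pos h]
  · rw [if_neg h]
    have : n.choose j = 0 := Nat.choose_eq_zero_of_lt (by simp at h; omega)
    rw [this]
    norm_num

lemma hrdeg (n : ℕ) (hn : 1 ≤ n) : (rpol n).natDegree ≤ n - 1 := by
  rw [natDegree_le_iff_coeff_eq_zero]
  intro N hN
  rw [rpol_coeff]
  rcases eq_or_lt_of_le (show n ≤ N by omega) with h | h
  · rw [show n - N = 0 by omega, show hcoef 0 = 0 from rfl, mul_zero]
  · rw [Nat.choose_eq_zero_of_lt h]
    norm_num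

lemma hfqdeg : (fq).natDegree = 2 := by
  show (X ^ 2 + X + 1 : ℤ[X]).natDegree = 2
  compute_degree!

lemma hval_s12 (n : ℕ) : acoef n ^ 2 - acoef n * bcoef n + bcoef n ^ 2 = 3 ^ (n - 1) := by
  obtain ⟨k, hk⟩ : ∃ k, (n - 1) / 2 = k := ⟨_, rfl⟩
  have h9 : ((-3 : ℤ)) ^ k * ((-3:ℤ)) ^ k = 3 ^ (2 * k) := by
    rw [← mul_pow, show (-3 : ℤ) * -3 = 3 ^ 2 by norm_num, ← pow_mul]
  by_cases he : (n - 1) % 2 = 0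
  · rw [acoef, bcoef, if_pos he, hk, show n - 1 = 2 * k by omega]
    linear_combination h9
  · rw [acoef, bcoef, if_neg he, hk, show n - 1 = 2 * k + 1 by omega, pow_succ]
    linear_combination (3 : ℤ) * h9

lemma resD0 (a b : ℤ) : res 2 0 fq (C a * X + C b) = b ^ 2 := by
  rw [res, Matrix.det_fin_two]
  rw [sylv_g (n' := 0) _ _ _ (by simp), sylv_g (n' := 0) _ _ _ (by simp),
    sylv_g (n' := 0) _ _ _ (by omega), sylv_g (n' := 0) _ _ _ (by omega)]
  norm_num [Fin.val_one, Fin.val_zero]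
  ring

theorem stmt12 (n : ℕ) (hn : 1 ≤ n) :
    res 2 (n - 1) (X ^ 2 + X + 1 : ℤ[X]) (rpol n) = 3 ^ (n - 1) := by
  show res 2 (n - 1) fq (rpol n) = 3 ^ (n - 1)
  obtain ⟨q, hq⟩ := hdvd n hn
  have hstep : res 2 (n - 1) fq (rpol n) = res 2 (n - 1) fq (lpol n) := by
    by_cases hq0 : q = 0
    · rw [hq0, mul_zero, sub_eq_zero] at hq
      rw [hq]
    · have hd1 : (fq * q).natDegree = 2 + q.natDegree := by
        rw [natDegree_mul (by exact hfm.ne_zero) hq0, hfqdeg]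
      have hd2 : (rpol n - lpol n).natDegree ≤ max (n - 1) 1 :=
        le_trans (natDegree_sub_le _ _)
          (max_le_max (hrdeg n hn) (natDegree_linear_le))
      rw [← hq] at hd1
      have hn3 : 3 ≤ n := by omega
      have hdq : q.natDegree ≤ n - 1 - 2 := by omega
      rw [show rpol n = lpol n + q * fq by linear_combination hq]
      exact resC (n - 1) (by omega) q hdq (lpol n)
  rw [hstep]
  rcases Nat.lt_or_ge n 2 with h2 | h2
  · have h1 : n = 1 := by omega
    subst h1
    rw [lpol, resD0, bcoef]
    norm_num
  · rw [show n - 1 = (n - 2) + 1 by omega, lpol, resD]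
    have h := hval_s12 n
    rw [show n - 1 = (n - 2) + 1 by omega] at h
    exact h
end
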